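/- The two-obstacle variational inequality ℰ_α(w̄, w̄) ≤ ℰ_α(w̄, w) for all w ∈ 𝒥 with g ≤ w ≤ h is equivalent, when w̄ = φ̄ − ψ̄, to the pair of inequalities ℰ_α(φ̄, φ̄) ≤ ℰ_α(φ̄, w + ψ̄) and ℰ_α(ψ̄, ψ̄) ≤ ℰ_α(ψ̄, φ̄ − w) for all such w; in particular the pair of one-sided inequalities implies the two-obstacle one. -/

import Mathlib

namespace LinearMap.BilinForm

variable {R M : Type*} [CommRing R] [AddCommGroup M] [Module R M]

theorem apply_sub_sub_apply_sub_eq (E : LinearMap.BilinForm R M) (φ ψ w : M) :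
    E (φ - ψ) w - E (φ - ψ) (φ - ψ) =
      (E φ (w + ψ) - E φ φ) + (E ψ (φ - w) - E ψ ψ) := by
  simp only [map_sub, map_add, LinearMap.sub_apply]
  ring

theorem apply_sub_self_le_iff [PartialOrder R] [IsOrderedAddMonoid R]
    (E : LinearMap.BilinForm R M) (φ ψ w : M) :
    E (φ - ψ) (φ - ψ) ≤ E (φ - ψ) w ↔ E φ φ + E ψ ψ ≤ E φ (w + ψ) + E ψ (φ - w) := by
  rw [← sub_nonneg, apply_sub_sub_apply_sub_eq, ← sub_nonneg (b := E φ φ + E ψ ψ),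
    add_sub_add_comm]

end LinearMap.BilinForm

open LinearMap.BilinForm in
/-- For w̄ = φ̄ − ψ̄, the two-obstacle variational inequality
ℰ_α(w̄,w̄) ≤ ℰ_α(w̄,w) for w ∈ 𝒥, g ≤ w ≤ h is equivalent to
ℰ_α(φ̄,φ̄) + ℰ_α(ψ̄,ψ̄) ≤ ℰ_α(φ̄, w+ψ̄) + ℰ_α(ψ̄, φ̄−w); in particular the pair of
one-sided inequalities implies the two-obstacle one. -/
theorem stmt_14 {V : Type*} [AddCommGroup V] [Module ℝ V] [PartialOrder V]
    (E : LinearMap.BilinForm ℝ V)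
    (J : Set V) (g h φb ψb wb : V) (hwb : wb = φb - ψb)
    (hpair : ∀ w ∈ J, g ≤ w → w ≤ h →
      E φb φb ≤ E φb (w + ψb) ∧ E ψb ψb ≤ E ψb (φb - w)) :
    (∀ w ∈ J, g ≤ w → w ≤ h →
      (E wb wb ≤ E wb w ↔ E φb φb + E ψb ψb ≤ E φb (w + ψb) + E ψb (φb - w))) ∧
    (∀ w ∈ J, g ≤ w → w ≤ h → E wb wb ≤ E wb w) := by
  subst hwb
  refine ⟨fun w _ _ _ => apply_sub_self_le_iff E φb ψb w, fun w hw hgw hwh => ?_⟩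
  obtain ⟨hφ, hψ⟩ := hpair w hw hgw hwh
  exact (apply_sub_self_le_iff E φb ψb w).mpr (add_le_add hφ hψ)
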